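/- For all i ≥ 2 and n ≥ 0, the word 11 is not a factor of the (n,i)-Fibonacci word f_n^[i]. -/

import Mathlib

/-- The (n,i)-Fibonacci words: f_0^[i] = 0, f_1^[i] = 0^{i-1} 1, f_n^[i] = f_{n-1}^[i] f_{n-2}^[i]. -/
def genFibWord (i : ℕ) : ℕ → List ℕ
  | 0 => [0]
  | 1 => List.replicate (i - 1) 0 ++ [1]
  | n + 2 => genFibWord i (n + 1) ++ genFibWord i n

/-- The relation "not both equal to 1". -/
def noOneOne (a b : ℕ) : Prop := ¬ (a = 1 ∧ b = 1)

lemma chain'_replicate_zero : ∀ k, List.Chain' noOneOne (List.replicate k (0 : ℕ))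
  | 0 => by simp [List.Chain']
  | k + 1 => by
    rw [List.replicate_succ, List.Chain', List.isChain_cons]
    refine ⟨fun y _ => by simp [noOneOne], chain'_replicate_zero k⟩

lemma genFibWord_head (i : ℕ) (hi : 2 ≤ i) : ∀ n, (genFibWord i n).head? = some 0
  | 0 => rfl
  | 1 => by
    obtain ⟨k, hk⟩ : ∃ k, i - 1 = k + 1 := ⟨i - 2, by omega⟩
    simp [genFibWord, hk, List.replicate_succ]
  | n + 2 => by
    have h := genFibWord_head i hi (n + 1)
    simp only [genFibWord, List.head?_append]
    rw [h]
    rfl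

lemma genFibWord_chain (i : ℕ) (hi : 2 ≤ i) :
    ∀ n, List.Chain' noOneOne (genFibWord i n)
  | 0 => by simp [genFibWord, List.Chain']
  | 1 => by
    rw [genFibWord, List.Chain', List.isChain_append]
    refine ⟨chain'_replicate_zero _, by simp, fun x _ y hy => ?_⟩
    have hx : x = 0 := List.eq_of_mem_replicate (List.mem_of_mem_getLast? ‹_›)
    simp at hy
    simp [noOneOne, hx]
  | n + 2 => by
    rw [genFibWord, List.Chain', List.isChain_append]
    refine ⟨genFibWord_chain i hi (n + 1), genFibWord_chain i hi n, fun x _ y hy => ?_⟩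
    rw [genFibWord_head i hi n] at hy
    simp at hy
    simp [noOneOne]
    omega

theorem stmt_2 (i : ℕ) (hi : 2 ≤ i) (n : ℕ) :
    ¬ ([1, 1] : List ℕ) <:+: genFibWord i n := by
  rintro ⟨s, t, hst⟩
  have h := genFibWord_chain i hi n
  rw [← hst, List.append_assoc, List.Chain', List.isChain_append] at h
  have h2 := h.2.1
  have : noOneOne 1 1 := (List.isChain_cons_cons.1 h2).1
  exact this ⟨rfl, rfl⟩
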